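/- arXiv:2508.06614 — 4 statements merged into one kernel-verified Lean document; each statement's English description precedes it below -/
import Mathlib

section
/- (Classical Fawzi–Renner inequality.) Let P, Q be probability distributions on a finite set X with supp(P) ⊆ supp(Q), let N be a stochastic channel, and let B_{N,Q} be the Bayes recovery channel of N with reference distribution Q. Setting P̂ = B_{N,Q}(N(P)), one has D_KL(P ‖ Q) − D_KL(N(P) ‖ N(Q)) ≥ D_KL(P ‖ P̂). -/
open Finset

/-!
By Bayes' rule `P̂(x) = Q(x) · ∑_y N(y|x) N(P)(y) / N(Q)(y)`, so
`D(P‖Q) - D(P‖P̂) = ∑_x P(x) log (P̂(x) / Q(x))`. Jensen's inequality for the concave `log`,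
with weights `N(·|x)`, bounds this from below by
`∑_x P(x) ∑_y N(y|x) log (N(P)(y) / N(Q)(y)) = D(N(P)‖N(Q))`.
-/

section WeightedLog

variable {ι : Type*} {s : Finset ι} {w r : ι → ℝ}

theorem sum_mul_pos_of_weights (hw : ∀ i ∈ s, 0 ≤ w i) (hw1 : ∑ i ∈ s, w i = 1)
    (hr : ∀ i ∈ s, 0 < w i → 0 < r i) : 0 < ∑ i ∈ s, w i * r i := by
  have hterm : ∀ i ∈ s, 0 ≤ w i * r i := fun i hi =>
    (hw i hi).eq_or_lt.elim (fun h => by simp [← h]) fun h => (mul_pos h (hr i hi h)).le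
  obtain ⟨i, hi, hwi⟩ : ∃ i ∈ s, (0 : ℝ) < w i :=
    exists_lt_of_sum_lt (by simp [hw1] : ∑ _i ∈ s, (0 : ℝ) < ∑ i ∈ s, w i)
  exact sum_pos' hterm ⟨i, hi, mul_pos hwi (hr i hi hwi)⟩

/-- Jensen's inequality for `log`; a point may lie outside the domain of `log` if it has
weight zero. -/
theorem sum_mul_log_le_log_sum_mul (hw : ∀ i ∈ s, 0 ≤ w i) (hw1 : ∑ i ∈ s, w i = 1)
    (hr : ∀ i ∈ s, 0 < w i → 0 < r i) :
    ∑ i ∈ s, w i * Real.log (r i) ≤ Real.log (∑ i ∈ s, w i * r i) := by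
  have hsupport (f : ι → ℝ) : ∑ i ∈ s with 0 < w i, w i * f i = ∑ i ∈ s, w i * f i :=
    sum_filter_of_ne fun i hi h => (hw i hi).lt_of_ne' (left_ne_zero_of_mul h)
  have hjensen := strictConcaveOn_log_Ioi.concaveOn.le_map_sum (t := {i ∈ s | 0 < w i})
    (w := w) (p := r) (fun i hi => (mem_filter.1 hi).2.le)
    (by simpa [hw1] using hsupport fun _ => 1)
    (fun i hi => hr i (mem_filter.1 hi).1 (mem_filter.1 hi).2)
  simpa only [smul_eq_mul, hsupport] using hjensen

end WeightedLog

section Channel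

variable {X Y : Type*} [Fintype X]

/-- `N(P)`, for the channel `N(y|x) = N y x`. -/
def channelApply (N : Y → X → ℝ) (P : X → ℝ) (y : Y) : ℝ := ∑ x, N y x * P x

/-- `B_{N,Q}(x|y)`, set to `0` on outputs `y` with `N(Q)(y) = 0`. -/
noncomputable def bayesRecovery (N : Y → X → ℝ) (Q : X → ℝ) (x : X) (y : Y) : ℝ :=
  if 0 < channelApply N Q y then N y x * Q x / channelApply N Q y else 0

noncomputable def recovered [Fintype Y] (N : Y → X → ℝ) (Q P : X → ℝ) (x : X) : ℝ :=
  ∑ y, bayesRecovery N Q x y * channelApply N P y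

variable {N : Y → X → ℝ} {P Q : X → ℝ}

theorem channelApply_nonneg (hN : ∀ y x, 0 ≤ N y x) (hP : ∀ x, 0 ≤ P x) (y : Y) :
    0 ≤ channelApply N P y :=
  sum_nonneg fun x _ => mul_nonneg (hN y x) (hP x)

theorem channelApply_pos (hN : ∀ y x, 0 ≤ N y x) (hP : ∀ x, 0 ≤ P x) {x : X} {y : Y}
    (hNyx : 0 < N y x) (hPx : 0 < P x) : 0 < channelApply N P y :=
  (mul_pos hNyx hPx).trans_le <|
    single_le_sum (fun x _ => mul_nonneg (hN y x) (hP x)) (mem_univ x)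

theorem sum_channelApply_mul [Fintype Y] (f : Y → ℝ) :
    ∑ y, channelApply N P y * f y = ∑ x, P x * ∑ y, N y x * f y := by
  simp only [channelApply, sum_mul, mul_sum]
  rw [sum_comm]
  exact sum_congr rfl fun x _ => sum_congr rfl fun y _ => by ring

theorem recovered_eq [Fintype Y] (hN : ∀ y x, 0 ≤ N y x) (hQ : ∀ x, 0 ≤ Q x) (x : X) :
    recovered N Q P x = Q x * ∑ y, N y x * (channelApply N P y / channelApply N Q y) := by
  rw [recovered, mul_sum]
  refine sum_congr rfl fun y _ => ?_
  rw [bayesRecovery]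
  split_ifs with h
  · field_simp
  · simp [le_antisymm (not_lt.1 h) (channelApply_nonneg hN hQ y)]

theorem mul_log_div_recovered_add_le [Fintype Y] (hN : ∀ y x, 0 ≤ N y x)
    (hN1 : ∀ x, ∑ y, N y x = 1) (hP : ∀ x, 0 ≤ P x) (hQ : ∀ x, 0 ≤ Q x)
    (hsupp : ∀ x, 0 < P x → 0 < Q x) (x : X) :
    P x * Real.log (P x / recovered N Q P x) +
        P x * ∑ y, N y x * Real.log (channelApply N P y / channelApply N Q y) ≤
      P x * Real.log (P x / Q x) := by
  rcases (hP x).eq_or_lt with hPx | hPx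
  · simp [← hPx]
  have hQx := hsupp x hPx
  have hratio : ∀ y ∈ univ, 0 < N y x → 0 < channelApply N P y / channelApply N Q y :=
    fun y _ hNyx => div_pos (channelApply_pos hN hP hNyx hPx) (channelApply_pos hN hQ hNyx hQx)
  have hS := sum_mul_pos_of_weights (fun y _ => hN y x) (hN1 x) hratio
  have hjensen := sum_mul_log_le_log_sum_mul (fun y _ => hN y x) (hN1 x) hratio
  rw [recovered_eq hN hQ, ← mul_add, ← div_div, Real.log_div (div_pos hPx hQx).ne' hS.ne']
  exact mul_le_mul_of_nonneg_left (by linarith) hPx.le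

end Channel

theorem classical_fawzi_renner_general {X : Type*} [Fintype X]
    (P Q : X → ℝ)
    (hPnn : ∀ x, 0 ≤ P x)
    (hQnn : ∀ x, 0 ≤ Q x)
    (hsupp : ∀ x, 0 < P x → 0 < Q x)
    (N : X → X → ℝ) (hNnn : ∀ y x, 0 ≤ N y x) (hNrow : ∀ x, ∑ y, N y x = 1)
    (NP NQ : X → ℝ)
    (hNP : ∀ y, NP y = ∑ x, N y x * P x)
    (hNQ : ∀ y, NQ y = ∑ x, N y x * Q x)
    (B : X → X → ℝ)
    (hB : ∀ x y, B x y = if 0 < NQ y then N y x * Q x / NQ y else 0)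
    (Phat : X → ℝ)
    (hPhat : ∀ x, Phat x = ∑ y, B x y * NP y) :
    (∑ x, P x * Real.log (P x / Phat x)) ≤
      (∑ x, P x * Real.log (P x / Q x)) - ∑ y, NP y * Real.log (NP y / NQ y) := by
  obtain rfl : NP = channelApply N P := funext hNP
  obtain rfl : NQ = channelApply N Q := funext hNQ
  obtain rfl : B = bayesRecovery N Q := funext fun x => funext (hB x)
  obtain rfl : Phat = recovered N Q P := funext hPhat
  have hpointwise := sum_le_sum fun x (_ : x ∈ univ) =>
    mul_log_div_recovered_add_le hNnn hNrow hPnn hQnn hsupp x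
  rw [sum_add_distrib] at hpointwise
  rw [sum_channelApply_mul]
  linarith

/-- Classical Fawzi–Renner inequality:
`D_KL(P ‖ Q) − D_KL(N(P) ‖ N(Q)) ≥ D_KL(P ‖ P̂)` where `P̂ = B_{N,Q}(N(P))`. -/
theorem classical_fawzi_renner {X : Type*} [Fintype X]
    (P Q : X → ℝ)
    (hPnn : ∀ x, 0 ≤ P x) (hPsum : ∑ x, P x = 1)
    (hQnn : ∀ x, 0 ≤ Q x) (hQsum : ∑ x, Q x = 1)
    (hsupp : ∀ x, 0 < P x → 0 < Q x)
    (N : X → X → ℝ) (hNnn : ∀ y x, 0 ≤ N y x) (hNrow : ∀ x, ∑ y, N y x = 1)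
    (NP NQ : X → ℝ)
    (hNP : ∀ y, NP y = ∑ x, N y x * P x)
    (hNQ : ∀ y, NQ y = ∑ x, N y x * Q x)
    (B : X → X → ℝ)
    (hB : ∀ x y, B x y = if 0 < NQ y then N y x * Q x / NQ y else 0)
    (Phat : X → ℝ)
    (hPhat : ∀ x, Phat x = ∑ y, B x y * NP y) :
    (∑ x, P x * Real.log (P x / Phat x)) ≤
      (∑ x, P x * Real.log (P x / Q x)) - ∑ y, NP y * Real.log (NP y / NQ y) :=
  classical_fawzi_renner_general P Q hPnn hQnn hsupp N hNnn hNrow NP NQ hNP hNQ B hB Phat hPhat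
end

section
/- (Local recovery error bounded by conditional mutual information.) Let P be a probability distribution on a finite tripartite space X_A × X_B × X_C, let N be a stochastic channel acting only on coordinate A, and let B be the local Bayes recovery channel built from the AB-marginal, B((x_A,x_B)|(y_A,x_B)) = N_A(y_A|x_A)P_AB(x_A,x_B)/∑_{x'_A} N_A(y_A|x'_A)P_AB(x'_A,x_B), acting as identity on C. Then with P̂ = (B ∘ N)(P), one has D_KL(P ‖ P̂) ≤ I(X_A : X_C | X_B)_P. -/
/-!
Write `P̂(a,b,c) = P_AB(a,b) · P̂(c|ab)` with `P̂(c|ab) = ∑_y N(y|a) N(P)(c|yb)`, so that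
`D(P ‖ P̂) = -H(C|AB)_P - E_P[log P̂(c|ab)]`. Concavity of `log` gives
`-log P̂(c|ab) ≤ -∑_y N(y|a) log N(P)(c|yb)`, whose `P`-average is `H(C|YB)` of `N(P)`.
Conditioning reduces entropy, and `N` leaves the `BC`-marginal alone, so this is at most
`H(C|B)_P`; and `H(C|B) - H(C|AB) = I(A:C|B)`.
-/

open Finset Real

/-- The entropy of the weights `q` scaled by their total mass `t`, i.e. `t * H(q / t)`; in this
unnormalised form `H(C | X) = ∑ x, weightedEntropy (Q x)` for a joint weight `Q` on `X × C`. -/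
noncomputable def weightedEntropy {C : Type*} [Fintype C] (q : C → ℝ) : ℝ :=
  ∑ c, q c * log ((∑ c', q c') / q c)

section WeightedEntropy

variable {X C : Type*} [Fintype X] [Fintype C]

theorem mul_log_div_le_sub {p r : ℝ} (hp : 0 < p) (hr : 0 < r) : p * log (r / p) ≤ r - p :=
  calc p * log (r / p) ≤ p * (r / p - 1) := by gcongr; exact log_le_sub_one_of_pos (by positivity)
    _ = r - p := by field_simp

theorem weightedEntropy_eq_sub {q : C → ℝ} (hq : ∀ c, 0 ≤ q c) :
    weightedEntropy q = (∑ c, q c) * log (∑ c, q c) - ∑ c, q c * log (q c) := by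
  rw [weightedEntropy, sum_mul, ← sum_sub_distrib]
  refine sum_congr rfl fun c _ => ?_
  rcases (hq c).eq_or_lt with h | h
  · simp [← h]
  · have ht : 0 < ∑ c', q c' := h.trans_le (single_le_sum (fun c' _ => hq c') (mem_univ c))
    rw [log_div ht.ne' h.ne', mul_sub]

/-- Gibbs' inequality for `Q x c` against `t x * u c / M`, built from the marginals `t`, `u` and
the total mass `M` of `Q`. -/
theorem mul_log_div_sub_mul_log_div_le {q t u M : ℝ} (hq : 0 ≤ q) (hqt : q ≤ t) (hqu : q ≤ u)
    (huM : u ≤ M) : q * log (t / q) - q * log (M / u) ≤ t * u / M - q := by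
  rcases hq.eq_or_lt with rfl | hq
  · simp only [zero_mul, sub_zero]
    exact div_nonneg (mul_nonneg hqt hqu) (hqu.trans huM)
  have ht := hq.trans_le hqt
  have hu := hq.trans_le hqu
  have hM := hu.trans_le huM
  calc q * log (t / q) - q * log (M / u) = q * log (t * u / M / q) := by
        rw [log_div ht.ne' hq.ne', log_div hM.ne' hu.ne', log_div (by positivity) hq.ne',
          log_div (by positivity) hM.ne', log_mul ht.ne' hu.ne']
        ring
    _ ≤ t * u / M - q := mul_log_div_le_sub hq (by positivity)

theorem sum_weightedEntropy_le (Q : X → C → ℝ) (hQ : ∀ x c, 0 ≤ Q x c) :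
    ∑ x, weightedEntropy (Q x) ≤ weightedEntropy (fun c => ∑ x, Q x c) := by
  set t : X → ℝ := fun x => ∑ c, Q x c
  set u : C → ℝ := fun c => ∑ x, Q x c
  set M := ∑ c, u c
  have hM : ∑ x, t x = M := sum_comm
  have hpoint : ∀ x c, Q x c * log (t x / Q x c) - Q x c * log (M / u c) ≤ t x * u c / M - Q x c :=
    fun x c => mul_log_div_sub_mul_log_div_le (hQ x c)
      (single_le_sum (fun c' _ => hQ x c') (mem_univ c))
      (single_le_sum (fun x' _ => hQ x' c) (mem_univ x))
      (single_le_sum (f := u) (fun c' _ => sum_nonneg fun x' _ => hQ x' c') (mem_univ c))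
  have hsum := sum_le_sum fun x (_ : x ∈ univ) => sum_le_sum fun c (_ : c ∈ univ) => hpoint x c
  have hrhs : ∑ x, ∑ c, (t x * u c / M - Q x c) = 0 := by
    simp only [sum_sub_distrib, ← sum_div, ← mul_sum, ← sum_mul, hM]
    rw [mul_self_div_self, sub_eq_zero, ← hM]
  have hlhs : weightedEntropy u = ∑ x, ∑ c, Q x c * log (M / u c) := by
    simp only [weightedEntropy, u, sum_mul]
    exact sum_comm
  rw [hrhs] at hsum
  simp only [sum_sub_distrib, sub_nonpos] at hsum
  rw [hlhs]
  exact hsum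

theorem sum_weightedEntropy_sub_sum_sum_weightedEntropy {A B : Type*} [Fintype A] [Fintype B]
    (P : A → B → C → ℝ) (hP : ∀ a b c, 0 ≤ P a b c) :
    ∑ b, weightedEntropy (fun c => ∑ a, P a b c) - ∑ a, ∑ b, weightedEntropy (P a b) =
      (-∑ a, ∑ b, (∑ c, P a b c) * log (∑ c, P a b c)) +
        (-∑ b, ∑ c, (∑ a, P a b c) * log (∑ a, P a b c)) -
        (-∑ a, ∑ b, ∑ c, P a b c * log (P a b c)) -
        (-∑ b, (∑ a, ∑ c, P a b c) * log (∑ a, ∑ c, P a b c)) := by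
  simp only [weightedEntropy_eq_sub (hP _ _), fun b => weightedEntropy_eq_sub fun c =>
    sum_nonneg fun a (_ : a ∈ univ) => hP a b c, sum_sub_distrib]
  rw [sum_comm (f := fun b c => (∑ a, P a b c) * log (∑ a, P a b c))]
  simp only [sum_comm (γ := C) (α := A)]
  ring

end WeightedEntropy

section Jensen

variable {ι : Type*} [Fintype ι] {w x : ι → ℝ}

theorem sum_mul_pos_of_sum_eq_one (hw : ∀ i, 0 ≤ w i) (hw1 : ∑ i, w i = 1)
    (hx : ∀ i, w i ≠ 0 → 0 < x i) : 0 < ∑ i, w i * x i := by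
  obtain ⟨i, -, hi⟩ := exists_ne_zero_of_sum_ne_zero (hw1 ▸ one_ne_zero : ∑ i, w i ≠ 0)
  refine sum_pos' (fun j _ => ?_) ⟨i, mem_univ i, mul_pos ((hw i).lt_of_ne' hi) (hx i hi)⟩
  by_cases hj : w j = 0
  · simp [hj]
  · exact mul_nonneg (hw j) (hx j hj).le

theorem sum_mul_log_le_log_sum_mul_s9 (hw : ∀ i, 0 ≤ w i) (hw1 : ∑ i, w i = 1)
    (hx : ∀ i, w i ≠ 0 → 0 < x i) : ∑ i, w i * log (x i) ≤ log (∑ i, w i * x i) := by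
  classical
  have key := strictConcaveOn_log_Ioi.concaveOn.le_map_sum (t := univ.filter (w · ≠ 0)) (p := x)
    (fun i _ => hw i) (by rwa [sum_filter_ne_zero]) (fun i hi => hx i (mem_filter.1 hi).2)
  simp only [smul_eq_mul] at key
  rwa [sum_filter_of_ne (fun i _ h => left_ne_zero_of_mul h),
    sum_filter_of_ne (fun i _ h => left_ne_zero_of_mul h)] at key

end Jensen

section Channel

variable {A B C Y : Type*} [Fintype A] [Fintype C] {N : Y → A → ℝ}
  {P : A → B → C → ℝ} {NP : Y → B → C → ℝ}

theorem div_sum_pos_of_ne_zero (hN : ∀ y a, 0 ≤ N y a) (hP : ∀ a b c, 0 < P a b c)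
    (hNP : ∀ y b c, NP y b c = ∑ a, N y a * P a b c) {y : Y} {a : A} (b : B) (c : C)
    (hya : N y a ≠ 0) : 0 < NP y b c / ∑ c', NP y b c' := by
  have hNP_pos : ∀ c, 0 < NP y b c := fun c => by
    rw [hNP]
    exact sum_pos' (fun a' _ => mul_nonneg (hN y a') (hP a' b c).le)
      ⟨a, mem_univ a, mul_pos ((hN y a).lt_of_ne' hya) (hP a b c)⟩
  exact div_pos (hNP_pos c) (sum_pos (fun c' _ => hNP_pos c') ⟨c, mem_univ c⟩)

variable [Fintype B] [Fintype Y]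

theorem sum_sum_mul_of_sum_eq_one (hN : ∀ a, ∑ y, N y a = 1) (f : A → ℝ) :
    ∑ y, ∑ a, N y a * f a = ∑ a, f a := by
  rw [sum_comm]
  simp [← sum_mul, hN]

theorem sum_mul_sum_mul_eq_sum_sum_mul (f : A → B → C → ℝ) (g : Y → B → C → ℝ) :
    ∑ a, ∑ b, ∑ c, f a b c * ∑ y, N y a * g y b c =
      ∑ b, ∑ y, ∑ c, (∑ a, N y a * f a b c) * g y b c := by
  rw [sum_comm]
  refine sum_congr rfl fun b _ => ?_
  simp only [mul_sum, sum_mul]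
  rw [sum_comm_cycle]
  refine sum_congr rfl fun y _ => ?_
  rw [sum_comm]
  exact sum_congr rfl fun c _ => sum_congr rfl fun a _ => by ring

theorem sum_mul_neg_log_recovery_le (hN : ∀ y a, 0 ≤ N y a) (hN1 : ∀ a, ∑ y, N y a = 1)
    (hP : ∀ a b c, 0 < P a b c) (hNP : ∀ y b c, NP y b c = ∑ a, N y a * P a b c) :
    ∑ a, ∑ b, ∑ c, P a b c * -log (∑ y, N y a * (NP y b c / ∑ c', NP y b c')) ≤
      ∑ b, weightedEntropy (fun c => ∑ a, P a b c) := by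
  have hJensen : ∀ a b c, -log (∑ y, N y a * (NP y b c / ∑ c', NP y b c')) ≤
      ∑ y, N y a * log ((∑ c', NP y b c') / NP y b c) := fun a b c => by
    have := sum_mul_log_le_log_sum_mul_s9 (hN · a) (hN1 a)
      fun y => div_sum_pos_of_ne_zero hN hP hNP b c
    simp only [← inv_div (NP _ b c), log_inv, mul_neg, sum_neg_distrib]
    linarith
  calc ∑ a, ∑ b, ∑ c, P a b c * -log (∑ y, N y a * (NP y b c / ∑ c', NP y b c'))
      ≤ ∑ a, ∑ b, ∑ c, P a b c * ∑ y, N y a * log ((∑ c', NP y b c') / NP y b c) := by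
        gcongr with a _ b _ c _
        · exact (hP a b c).le
        · exact hJensen a b c
    _ = ∑ b, ∑ y, weightedEntropy (NP y b) := by
        simp only [sum_mul_sum_mul_eq_sum_sum_mul, ← hNP, weightedEntropy]
    _ ≤ ∑ b, weightedEntropy (fun c => ∑ y, NP y b c) := by
        gcongr with b
        exact sum_weightedEntropy_le (fun y c => NP y b c) fun y c => by
          rw [hNP]; exact sum_nonneg fun a _ => mul_nonneg (hN y a) (hP a b c).le
    _ = ∑ b, weightedEntropy (fun c => ∑ a, P a b c) := by
        simp only [hNP, sum_sum_mul_of_sum_eq_one hN1]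

theorem sum_mul_log_div_recovery_le (hN : ∀ y a, 0 ≤ N y a) (hN1 : ∀ a, ∑ y, N y a = 1)
    (hP : ∀ a b c, 0 < P a b c) (hNP : ∀ y b c, NP y b c = ∑ a, N y a * P a b c) :
    ∑ a, ∑ b, ∑ c, P a b c * log (P a b c /
        ((∑ c', P a b c') * ∑ y, N y a * (NP y b c / ∑ c', NP y b c'))) ≤
      ∑ b, weightedEntropy (fun c => ∑ a, P a b c) - ∑ a, ∑ b, weightedEntropy (P a b) := by
  have hsplit : ∀ a b c, P a b c * log (P a b c /
      ((∑ c', P a b c') * ∑ y, N y a * (NP y b c / ∑ c', NP y b c'))) =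
      P a b c * -log (∑ y, N y a * (NP y b c / ∑ c', NP y b c')) -
        P a b c * log ((∑ c', P a b c') / P a b c) := fun a b c => by
    have hPc := hP a b c
    have hPab : 0 < ∑ c', P a b c' := sum_pos (fun c' _ => hP a b c') ⟨c, mem_univ c⟩
    have hS := sum_mul_pos_of_sum_eq_one (hN · a) (hN1 a)
      fun y => div_sum_pos_of_ne_zero hN hP hNP b c (y := y)
    rw [log_div hPc.ne' (by positivity), log_mul hPab.ne' hS.ne', log_div hPab.ne' hPc.ne']
    ring
  simp only [hsplit, sum_sub_distrib, weightedEntropy]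
  gcongr
  exact sum_mul_neg_log_recovery_le hN hN1 hP hNP

end Channel

theorem local_recovery_le_cmi_general {XA XB XC : Type*}
    [Fintype XA] [Fintype XB] [Fintype XC]
    (P : XA → XB → XC → ℝ)
    (hPpos : ∀ a b c, 0 < P a b c)
    (NA : XA → XA → ℝ) (hNnn : ∀ y x, 0 ≤ NA y x) (hNrow : ∀ x, ∑ y, NA y x = 1)
    (PAB : XA → XB → ℝ) (hPAB : ∀ a b, PAB a b = ∑ c, P a b c)
    (PBC : XB → XC → ℝ) (hPBC : ∀ b c, PBC b c = ∑ a, P a b c)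
    (PB : XB → ℝ) (hPB : ∀ b, PB b = ∑ a, ∑ c, P a b c)
    -- forward evolution `N(P)`
    (NP : XA → XB → XC → ℝ)
    (hNP : ∀ y b c, NP y b c = ∑ a, NA y a * P a b c)
    -- locally recovered distribution `P̂ = B_{N, P_AB}(N(P))`
    (Phat : XA → XB → XC → ℝ)
    (hPhat : ∀ a b c, Phat a b c =
      ∑ y, (NA y a * PAB a b / ∑ a', NA y a' * PAB a' b) * NP y b c)
    -- Shannon entropies
    (H3 HAB HBC HB : ℝ)
    (hH3 : H3 = -∑ a, ∑ b, ∑ c, P a b c * Real.log (P a b c))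
    (hHAB : HAB = -∑ a, ∑ b, PAB a b * Real.log (PAB a b))
    (hHBC : HBC = -∑ b, ∑ c, PBC b c * Real.log (PBC b c))
    (hHB : HB = -∑ b, PB b * Real.log (PB b)) :
    (∑ a, ∑ b, ∑ c, P a b c * Real.log (P a b c / Phat a b c))
      ≤ HAB + HBC - H3 - HB := by
  have hPhat' : ∀ a b c, Phat a b c =
      (∑ c', P a b c') * ∑ y, NA y a * (NP y b c / ∑ c', NP y b c') := fun a b c => by
    have hmarg : ∀ y, ∑ a', NA y a' * PAB a' b = ∑ c', NP y b c' := fun y => by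
      simp only [hPAB, hNP, mul_sum]
      exact sum_comm
    rw [hPhat, ← hPAB, mul_sum]
    exact sum_congr rfl fun y _ => by rw [hmarg]; ring
  simp only [hPhat', hH3, hHAB, hHBC, hHB, hPAB, hPBC, hPB]
  rw [← sum_weightedEntropy_sub_sum_sum_weightedEntropy P fun a b c => (hPpos a b c).le]
  exact sum_mul_log_div_recovery_le hNnn hNrow hPpos hNP

/-- Local recovery error is bounded by conditional mutual information:
`D_KL(P ‖ P̂) ≤ I(X_A : X_C | X_B)_P`, where `P̂` is obtained by applying the local
Bayes recovery channel (built from the `AB`-marginal) after the forward channel. -/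
theorem local_recovery_le_cmi {XA XB XC : Type*}
    [Fintype XA] [Fintype XB] [Fintype XC]
    (P : XA → XB → XC → ℝ)
    (hPpos : ∀ a b c, 0 < P a b c) (hPsum : ∑ a, ∑ b, ∑ c, P a b c = 1)
    (NA : XA → XA → ℝ) (hNnn : ∀ y x, 0 ≤ NA y x) (hNrow : ∀ x, ∑ y, NA y x = 1)
    (PAB : XA → XB → ℝ) (hPAB : ∀ a b, PAB a b = ∑ c, P a b c)
    (PBC : XB → XC → ℝ) (hPBC : ∀ b c, PBC b c = ∑ a, P a b c)
    (PB : XB → ℝ) (hPB : ∀ b, PB b = ∑ a, ∑ c, P a b c)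
    -- forward evolution `N(P)`
    (NP : XA → XB → XC → ℝ)
    (hNP : ∀ y b c, NP y b c = ∑ a, NA y a * P a b c)
    -- locally recovered distribution `P̂ = B_{N, P_AB}(N(P))`
    (Phat : XA → XB → XC → ℝ)
    (hPhat : ∀ a b c, Phat a b c =
      ∑ y, (NA y a * PAB a b / ∑ a', NA y a' * PAB a' b) * NP y b c)
    -- Shannon entropies
    (H3 HAB HBC HB : ℝ)
    (hH3 : H3 = -∑ a, ∑ b, ∑ c, P a b c * Real.log (P a b c))
    (hHAB : HAB = -∑ a, ∑ b, PAB a b * Real.log (PAB a b))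
    (hHBC : HBC = -∑ b, ∑ c, PBC b c * Real.log (PBC b c))
    (hHB : HB = -∑ b, PB b * Real.log (PB b)) :
    (∑ a, ∑ b, ∑ c, P a b c * Real.log (P a b c / Phat a b c))
      ≤ HAB + HBC - H3 - HB :=
  local_recovery_le_cmi_general P hPpos NA hNnn hNrow PAB hPAB PBC hPBC PB hPB NP hNP Phat hPhat H3
    HAB HBC HB hH3 hHAB hHBC hHB
end

section
/- (Combined Pinsker + CMI bound.) Under the hypotheses of the local Bayes recovery setup, the total variation distance between the original distribution P and the locally recovered distribution P̂ satisfies 2·TV(P, P̂)² ≤ D_KL(P ‖ P̂) ≤ I(X_A : X_C | X_B)_P. -/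
/-!
Pinsker: multiplying the pointwise bound `klFun t ≥ 3 (t - 1)² / (2 (t + 2))` (a two-step
derivative argument) by `y` at `t = x / y` gives
`x log (x / y) ≥ x - y + 3 (x - y)² / (2 (x + 2 y))`. Summed, the linear terms cancel, and
Sedrakyan's form of Cauchy–Schwarz with `∑ (p + 2 q) = 3` turns the quadratic ones into `2 TV²`.

CMI bound: write `Q = (N ⊗ id) P`, so that `P̂(abc) = ∑_y N(y|a) P(ab) Q(ybc) / Q(yb)` while
`P(abc) = ∑_y N(y|a) P(abc)`. Joint convexity of `x log (x / y)` (the log-sum inequality) bounds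
`D(P ‖ P̂)` by `-H(C|AB)_P + H(C|YB)_Q`, and conditioning reduces entropy:
`H(C|YB)_Q ≤ H(C|B)_Q = H(C|B)_P`, since `N` leaves the `BC`-marginal unchanged.
-/

open Finset Real InformationTheory

lemma isMinOn_Ioi_of_hasDerivAt_of_sign {f f' : ℝ → ℝ} {c : ℝ} (hc : 0 < c)
    (hf : ∀ t, 0 < t → HasDerivAt f (f' t) t) (hf'_neg : ∀ t, 0 < t → t < c → f' t ≤ 0)
    (hf'_pos : ∀ t, c < t → 0 ≤ f' t) : IsMinOn f (Set.Ioi 0) c := by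
  refine isMinOn_iff.2 fun t (ht : 0 < t) => ?_
  have hcont : ContinuousOn f (Set.Ioi 0) := fun s hs => (hf s hs).continuousAt.continuousWithinAt
  rcases le_total c t with hct | htc
  · have hmono : MonotoneOn f (Set.Ici c) := by
      refine monotoneOn_of_hasDerivWithinAt_nonneg (f' := f') (convex_Ici c)
        (hcont.mono fun s hs => hc.trans_le hs) (fun s hs => ?_) (fun s hs => ?_)
      · rw [interior_Ici] at hs ⊢
        exact (hf s (hc.trans hs)).hasDerivWithinAt
      · rw [interior_Ici] at hs
        exact hf'_pos s hs
    exact hmono Set.self_mem_Ici hct hct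
  · have hanti : AntitoneOn f (Set.Ioc 0 c) := by
      refine antitoneOn_of_hasDerivWithinAt_nonpos (f' := f') (convex_Ioc 0 c)
        (hcont.mono Set.Ioc_subset_Ioi_self) (fun s hs => ?_) (fun s hs => ?_)
      · rw [interior_Ioc] at hs ⊢
        exact (hf s hs.1).hasDerivWithinAt
      · rw [interior_Ioc] at hs
        exact hf'_neg s hs.1 hs.2
    exact hanti ⟨ht, htc⟩ ⟨hc, le_rfl⟩ htc

lemma hasDerivAt_log_sub_div {t : ℝ} (ht : 0 < t) :
    HasDerivAt (fun s => log s - 3 * ((s - 1) * (s + 5)) / (2 * (s + 2) ^ 2))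
      (t⁻¹ - 27 / (t + 2) ^ 3) t := by
  have h2 : 0 < t + 2 := by positivity
  have hq : HasDerivAt (fun s => 3 * ((s - 1) * (s + 5)) / (2 * (s + 2) ^ 2))
      (27 / (t + 2) ^ 3) t := by
    refine (((((hasDerivAt_id t).sub_const 1).mul ((hasDerivAt_id t).add_const 5)).const_mul 3).div
      ((((hasDerivAt_id t).add_const 2).pow 2).const_mul 2) (by simp [h2.ne'])).congr_deriv ?_
    simp only [id, Pi.pow_apply, Pi.mul_apply]
    field_simp
    ring
  exact (hasDerivAt_log ht.ne').sub hq

lemma log_sub_div_monotoneOn :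
    MonotoneOn (fun s => log s - 3 * ((s - 1) * (s + 5)) / (2 * (s + 2) ^ 2)) (Set.Ioi 0) := by
  refine monotoneOn_of_hasDerivWithinAt_nonneg (f' := fun s => s⁻¹ - 27 / (s + 2) ^ 3)
    (convex_Ioi 0)
    (fun s hs => (hasDerivAt_log_sub_div hs).continuousAt.continuousWithinAt)
    (fun s hs => ?_) (fun s hs => ?_) <;> rw [interior_Ioi] at *
  · exact (hasDerivAt_log_sub_div hs).hasDerivWithinAt
  · have hs : (0 : ℝ) < s := hs
    -- `(s + 2) ^ 3 - 27 s = (s - 1) ^ 2 (s + 8)`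
    rw [sub_nonneg, div_le_iff₀ (by positivity), inv_mul_eq_div, le_div_iff₀ hs]
    nlinarith [mul_nonneg (sq_nonneg (s - 1)) (by positivity : (0 : ℝ) ≤ s + 8)]

lemma three_mul_sq_div_le_klFun {t : ℝ} (ht : 0 < t) :
    3 * (t - 1) ^ 2 / (2 * (t + 2)) ≤ klFun t := by
  set g : ℝ → ℝ := fun s => log s - 3 * ((s - 1) * (s + 5)) / (2 * (s + 2) ^ 2)
  have hg1 : g 1 = 0 := by norm_num [g]
  have hderiv : ∀ s, 0 < s → HasDerivAt (fun s => klFun s - 3 * (s - 1) ^ 2 / (2 * (s + 2)))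
      (g s) s := by
    intro s hs
    have h2 : 0 < s + 2 := by positivity
    refine ((hasDerivAt_klFun hs.ne').sub ((((hasDerivAt_id s).sub_const 1).pow 2).const_mul 3
      |>.div (((hasDerivAt_id s).add_const 2).const_mul 2) (by simp [h2.ne']))).congr_deriv ?_
    simp only [g, id, Pi.pow_apply]
    field_simp
    ring
  have hmin := isMinOn_Ioi_of_hasDerivAt_of_sign one_pos hderiv
    (fun s hs hs1 => hg1 ▸ log_sub_div_monotoneOn hs (Set.mem_Ioi.2 one_pos) hs1.le)
    fun s hs => hg1 ▸ log_sub_div_monotoneOn (Set.mem_Ioi.2 one_pos)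
      (Set.mem_Ioi.2 (one_pos.trans hs)) hs.le
  have := isMinOn_iff.1 hmin t ht
  norm_num [klFun_one] at this
  linarith

lemma mul_klFun_div {x y : ℝ} (hy : y ≠ 0) : y * klFun (x / y) = x * log (x / y) + y - x := by
  rw [klFun_apply]
  field_simp

lemma sub_le_mul_log_div {x y : ℝ} (hx : 0 ≤ x) (hy : 0 < y) : x - y ≤ x * log (x / y) := by
  have := mul_nonneg hy.le (klFun_nonneg (div_nonneg hx hy.le))
  rw [mul_klFun_div hy.ne'] at this
  linarith

lemma sub_add_sq_div_le_mul_log_div {x y : ℝ} (hx : 0 < x) (hy : 0 < y) :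
    x - y + 3 * (x - y) ^ 2 / (2 * (x + 2 * y)) ≤ x * log (x / y) := by
  have h := mul_le_mul_of_nonneg_left (three_mul_sq_div_le_klFun (div_pos hx hy)) hy.le
  rw [mul_klFun_div hy.ne'] at h
  have hxy : 0 < x + 2 * y := by positivity
  have : y * (3 * (x / y - 1) ^ 2 / (2 * (x / y + 2))) =
      3 * (x - y) ^ 2 / (2 * (x + 2 * y)) := by
    field_simp
  linarith

theorem pinsker_inequality {ι : Type*} [Fintype ι] {p q : ι → ℝ} (hp : ∀ i, 0 < p i)
    (hq : ∀ i, 0 < q i) (hp1 : ∑ i, p i = 1) (hq1 : ∑ i, q i = 1) :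
    (∑ i, |p i - q i|) ^ 2 / 2 ≤ ∑ i, p i * log (p i / q i) := by
  have hpq : ∀ i, 0 < p i + 2 * q i := fun i => by linarith [hp i, hq i]
  have hsum : ∑ i, (p i + 2 * q i) = 3 := by
    rw [sum_add_distrib, ← mul_sum, hp1, hq1]; norm_num
  calc (∑ i, |p i - q i|) ^ 2 / 2
      = 3 / 2 * ((∑ i, |p i - q i|) ^ 2 / ∑ i, (p i + 2 * q i)) := by rw [hsum]; ring
    _ ≤ 3 / 2 * ∑ i, |p i - q i| ^ 2 / (p i + 2 * q i) := by
      gcongr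
      exact sq_sum_div_le_sum_sq_div _ _ fun i _ => hpq i
    _ = ∑ i, (p i - q i + 3 * (p i - q i) ^ 2 / (2 * (p i + 2 * q i))) := by
      rw [sum_add_distrib, sum_sub_distrib, hp1, hq1, sub_self, zero_add, mul_sum]
      refine sum_congr rfl fun i _ => ?_
      rw [sq_abs]
      field_simp
    _ ≤ ∑ i, p i * log (p i / q i) :=
      sum_le_sum fun i _ => sub_add_sq_div_le_mul_log_div (hp i) (hq i)

theorem mul_log_div_le_sum_mul_log_div {ι : Type*} [Fintype ι] {u v : ι → ℝ}
    (hu : ∀ i, 0 ≤ u i) (hv : ∀ i, 0 ≤ v i) (huv : ∀ i, 0 < u i → 0 < v i) :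
    (∑ i, u i) * log ((∑ i, u i) / ∑ i, v i) ≤ ∑ i, u i * log (u i / v i) := by
  set U := ∑ i, u i
  set V := ∑ i, v i
  have hU : 0 ≤ U := sum_nonneg fun i _ => hu i
  have hV : 0 ≤ V := sum_nonneg fun i _ => hv i
  have hVU : V * (U / V) = U := by
    rcases hV.eq_or_lt with hV0 | hV0
    · have hv0 := (sum_eq_zero_iff_of_nonneg fun i _ => hv i).1 hV0.symm
      have hu0 : ∀ i, u i = 0 := fun i =>
        (hu i).eq_or_lt.elim Eq.symm fun h => absurd (hv0 i (mem_univ i)) (huv i h).ne'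
      simp [U, ← hV0, hu0]
    · field_simp
  have hterm : ∀ i, u i * log (U / V) + (u i - v i * (U / V)) ≤ u i * log (u i / v i) := by
    intro i
    rcases (hu i).eq_or_lt with hui | hui
    · rw [← hui]
      simpa using mul_nonneg (hv i) (div_nonneg hU hV)
    have hvi := huv i hui
    have hUpos : 0 < U := hui.trans_le (single_le_sum (fun j _ => hu j) (mem_univ i))
    have hVpos : 0 < V := hvi.trans_le (single_le_sum (fun j _ => hv j) (mem_univ i))
    have hsplit : log (u i / v i) = log (U / V) + log (u i / (v i * (U / V))) := by
      rw [← log_mul (by positivity) (by positivity)]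
      field_simp
    rw [hsplit, mul_add]
    gcongr
    exact sub_le_mul_log_div hui.le (by positivity)
  calc U * log (U / V) = ∑ i, (u i * log (U / V) + (u i - v i * (U / V))) := by
        rw [sum_add_distrib, sum_sub_distrib, ← sum_mul, ← sum_mul, hVU, sub_self, add_zero]
    _ ≤ ∑ i, u i * log (u i / v i) := sum_le_sum fun i _ => hterm i

lemma log_div_eq_neg_log_div (x y : ℝ) : log (x / y) = -log (y / x) := by
  rw [← log_inv, inv_div]

theorem mul_log_div_sum_mul_le {ι : Type*} [Fintype ι] {p : ℝ} {w x : ι → ℝ} (hp : 0 ≤ p)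
    (hw : ∀ i, 0 ≤ w i) (hw1 : ∑ i, w i = 1) (hx : ∀ i, 0 < w i → 0 < x i) :
    p * log (p / ∑ i, w i * x i) ≤ ∑ i, w i * (p * log (p / x i)) := by
  have hwx : ∀ i, 0 ≤ w i * x i := fun i =>
    (hw i).eq_or_lt.elim (fun h => by simp [← h]) fun h => (mul_pos h (hx i h)).le
  have := mul_log_div_le_sum_mul_log_div (u := fun i => w i * p) (fun i => mul_nonneg (hw i) hp)
    hwx fun i h => mul_pos (pos_of_mul_pos_left h hp) (hx i (pos_of_mul_pos_left h hp))
  rw [← sum_mul, hw1, one_mul] at this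
  refine this.trans_eq (sum_congr rfl fun i _ => ?_)
  rcases (hw i).eq_or_lt with h | h
  · simp [← h]
  · rw [mul_div_mul_left _ _ h.ne', mul_assoc]

theorem sum_sum_mul_log_sum_div_le {ι κ : Type*} [Fintype ι] [Fintype κ] {Q : ι → κ → ℝ}
    (hQ : ∀ i k, 0 ≤ Q i k) :
    ∑ i, ∑ k, Q i k * log ((∑ k', Q i k') / Q i k) ≤
      ∑ k, (∑ i, Q i k) * log ((∑ i, ∑ k', Q i k') / ∑ i, Q i k) := by
  rw [sum_comm]
  refine sum_le_sum fun k _ => ?_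
  have := mul_log_div_le_sum_mul_log_div (u := fun i => Q i k) (v := fun i => ∑ k', Q i k')
    (fun i => hQ i k) (fun i => sum_nonneg fun k' _ => hQ i k')
    fun i h => h.trans_le (single_le_sum (fun k' _ => hQ i k') (mem_univ k))
  simp only [log_div_eq_neg_log_div (∑ k', Q _ k'), log_div_eq_neg_log_div (∑ i, ∑ k', Q i k'),
    mul_neg, sum_neg_distrib]
  exact neg_le_neg this

theorem sum_sum_mul_log_div_marginal {ι κ : Type*} [Fintype ι] [Fintype κ] {Q : ι → κ → ℝ}
    {q : ι → ℝ} (hQ : ∀ i k, 0 ≤ Q i k) (hq : ∀ i, q i = ∑ k, Q i k) :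
    ∑ i, ∑ k, Q i k * log (Q i k / q i) =
      ∑ i, ∑ k, Q i k * log (Q i k) - ∑ i, q i * log (q i) := by
  rw [← sum_sub_distrib]
  refine sum_congr rfl fun i _ => ?_
  rw [hq i, sum_mul, ← sum_sub_distrib, ← hq i]
  refine sum_congr rfl fun k _ => ?_
  rcases (hQ i k).eq_or_lt with h | h
  · simp [← h]
  have hqi : 0 < q i := h.trans_le (hq i ▸ single_le_sum (fun k _ => hQ i k) (mem_univ k))
  rw [log_div h.ne' hqi.ne']
  ring

section Recovery

variable {XA XB XC : Type*} {P : XA → XB → XC → ℝ} {NA : XA → XA → ℝ} {PAB : XA → XB → ℝ}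
  {NP Phat : XA → XB → XC → ℝ}

lemma sum_channel_thd [Fintype XA] [Fintype XC] (hPAB : ∀ a b, PAB a b = ∑ c, P a b c)
    (hNP : ∀ y b c, NP y b c = ∑ a, NA y a * P a b c) (y : XA) (b : XB) :
    ∑ c, NP y b c = ∑ a, NA y a * PAB a b := by
  simp only [hNP, hPAB, mul_sum]
  exact sum_comm

lemma sum_channel_fst [Fintype XA] (hNrow : ∀ x, ∑ y, NA y x = 1)
    (hNP : ∀ y b c, NP y b c = ∑ a, NA y a * P a b c) (b : XB) (c : XC) :
    ∑ y, NP y b c = ∑ a, P a b c := by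
  simp only [hNP]
  rw [sum_comm]
  simp only [← sum_mul, hNrow, one_mul]

lemma channel_nonneg [Fintype XA] (hP : ∀ a b c, 0 < P a b c) (hN : ∀ y x, 0 ≤ NA y x)
    (hNP : ∀ y b c, NP y b c = ∑ a, NA y a * P a b c) (y : XA) (b : XB) (c : XC) :
    0 ≤ NP y b c :=
  hNP y b c ▸ sum_nonneg fun a _ => mul_nonneg (hN y a) (hP a b c).le

lemma channel_pos [Fintype XA] (hP : ∀ a b c, 0 < P a b c) (hN : ∀ y x, 0 ≤ NA y x)
    (hNP : ∀ y b c, NP y b c = ∑ a, NA y a * P a b c) {y a : XA} (hya : 0 < NA y a) (b : XB)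
    (c : XC) : 0 < NP y b c :=
  hNP y b c ▸ sum_pos' (fun a' _ => mul_nonneg (hN y a') (hP a' b c).le)
    ⟨a, mem_univ a, mul_pos hya (hP a b c)⟩

lemma sum_channel_pos [Fintype XA] [Fintype XC] (hP : ∀ a b c, 0 < P a b c)
    (hN : ∀ y x, 0 ≤ NA y x) (hNP : ∀ y b c, NP y b c = ∑ a, NA y a * P a b c) {y a : XA}
    (hya : 0 < NA y a) (b : XB) (c : XC) : 0 < ∑ c', NP y b c' :=
  (channel_pos hP hN hNP hya b c).trans_le
    (single_le_sum (fun c' _ => channel_nonneg hP hN hNP y b c') (mem_univ c))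

lemma recovery_eq [Fintype XA] [Fintype XC] (hPAB : ∀ a b, PAB a b = ∑ c, P a b c)
    (hNP : ∀ y b c, NP y b c = ∑ a, NA y a * P a b c)
    (hPhat : ∀ a b c, Phat a b c =
      ∑ y, (NA y a * PAB a b / ∑ a', NA y a' * PAB a' b) * NP y b c) (a : XA) (b : XB) (c : XC) :
    Phat a b c = ∑ y, NA y a * (PAB a b / (∑ c', NP y b c') * NP y b c) := by
  rw [hPhat]
  refine sum_congr rfl fun y _ => ?_
  rw [sum_channel_thd hPAB hNP]
  ring

lemma recovery_term_pos [Fintype XA] [Fintype XC] (hP : ∀ a b c, 0 < P a b c)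
    (hN : ∀ y x, 0 ≤ NA y x) (hPAB : ∀ a b, PAB a b = ∑ c, P a b c)
    (hNP : ∀ y b c, NP y b c = ∑ a, NA y a * P a b c) {y a : XA} (hya : 0 < NA y a) (b : XB)
    (c : XC) : 0 < PAB a b / (∑ c', NP y b c') * NP y b c := by
  have hPAB_pos : 0 < PAB a b := hPAB a b ▸ sum_pos (fun c _ => hP a b c) ⟨c, mem_univ c⟩
  have := channel_pos hP hN hNP hya b c
  have := sum_channel_pos hP hN hNP hya b c
  positivity

lemma recovery_pos [Fintype XA] [Fintype XC] (hP : ∀ a b c, 0 < P a b c)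
    (hN : ∀ y x, 0 ≤ NA y x) (hNrow : ∀ x, ∑ y, NA y x = 1)
    (hPAB : ∀ a b, PAB a b = ∑ c, P a b c) (hNP : ∀ y b c, NP y b c = ∑ a, NA y a * P a b c)
    (hPhat : ∀ a b c, Phat a b c =
      ∑ y, (NA y a * PAB a b / ∑ a', NA y a' * PAB a' b) * NP y b c) (a : XA) (b : XB) (c : XC) :
    0 < Phat a b c := by
  obtain ⟨y, -, hy⟩ : ∃ y ∈ univ, (0 : ℝ) < NA y a :=
    exists_lt_of_sum_lt (by simp [hNrow])
  rw [recovery_eq hPAB hNP hPhat]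
  refine sum_pos' (fun y' _ => ?_)
    ⟨y, mem_univ y, mul_pos hy (recovery_term_pos hP hN hPAB hNP hy b c)⟩
  rcases (hN y' a).eq_or_lt with h | h
  · simp [← h]
  · exact (mul_pos h (recovery_term_pos hP hN hPAB hNP h b c)).le

lemma sum_recovery_fst [Fintype XA] [Fintype XC] (hP : ∀ a b c, 0 < P a b c)
    (hN : ∀ y x, 0 ≤ NA y x) (hNrow : ∀ x, ∑ y, NA y x = 1)
    (hPAB : ∀ a b, PAB a b = ∑ c, P a b c) (hNP : ∀ y b c, NP y b c = ∑ a, NA y a * P a b c)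
    (hPhat : ∀ a b c, Phat a b c =
      ∑ y, (NA y a * PAB a b / ∑ a', NA y a' * PAB a' b) * NP y b c) (b : XB) (c : XC) :
    ∑ a, Phat a b c = ∑ a, P a b c := by
  rw [← sum_channel_fst hNrow hNP]
  simp only [hPhat]
  rw [sum_comm]
  refine sum_congr rfl fun y _ => ?_
  rw [← sum_mul, ← sum_div]
  rcases eq_or_ne (∑ a', NA y a' * PAB a' b) 0 with h | h
  · -- a vanishing normaliser forces `NP y b c = 0`, so the junk value `x / 0 = 0` is harmless
    rw [← sum_channel_thd hPAB hNP] at h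
    rw [(sum_eq_zero_iff_of_nonneg fun c' _ => channel_nonneg hP hN hNP y b c').1 h c
      (mem_univ c)]
    simp
  · rw [div_self h, one_mul]

lemma mul_log_div_recovery_le [Fintype XA] [Fintype XC] (hP : ∀ a b c, 0 < P a b c)
    (hN : ∀ y x, 0 ≤ NA y x) (hNrow : ∀ x, ∑ y, NA y x = 1)
    (hPAB : ∀ a b, PAB a b = ∑ c, P a b c) (hNP : ∀ y b c, NP y b c = ∑ a, NA y a * P a b c)
    (hPhat : ∀ a b c, Phat a b c =
      ∑ y, (NA y a * PAB a b / ∑ a', NA y a' * PAB a' b) * NP y b c) (a : XA) (b : XB) (c : XC) :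
    P a b c * log (P a b c / Phat a b c) ≤ P a b c * log (P a b c / PAB a b) +
      ∑ y, NA y a * (P a b c * log ((∑ c', NP y b c') / NP y b c)) := by
  have hPAB_pos : 0 < PAB a b := hPAB a b ▸ sum_pos (fun c _ => hP a b c) ⟨c, mem_univ c⟩
  rw [recovery_eq hPAB hNP hPhat]
  refine (mul_log_div_sum_mul_le (hP a b c).le (fun y => hN y a) (hNrow a)
    fun y hy => recovery_term_pos hP hN hPAB hNP hy b c).trans_eq ?_
  rw [← one_mul (P a b c * log (P a b c / PAB a b)), ← hNrow a, sum_mul, ← sum_add_distrib]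
  refine sum_congr rfl fun y _ => ?_
  rcases (hN y a).eq_or_lt with h | h
  · simp [← h]
  rw [← mul_add, ← mul_add, ← log_mul (div_pos (hP a b c) hPAB_pos).ne'
    (div_pos (sum_channel_pos hP hN hNP h b c) (channel_pos hP hN hNP h b c)).ne']
  congr 3
  field_simp

lemma kl_recovery_le [Fintype XA] [Fintype XB] [Fintype XC] (hP : ∀ a b c, 0 < P a b c)
    (hN : ∀ y x, 0 ≤ NA y x) (hNrow : ∀ x, ∑ y, NA y x = 1)
    (hPAB : ∀ a b, PAB a b = ∑ c, P a b c) (hNP : ∀ y b c, NP y b c = ∑ a, NA y a * P a b c)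
    (hPhat : ∀ a b c, Phat a b c =
      ∑ y, (NA y a * PAB a b / ∑ a', NA y a' * PAB a' b) * NP y b c) :
    ∑ a, ∑ b, ∑ c, P a b c * log (P a b c / Phat a b c) ≤
      ∑ a, ∑ b, ∑ c, P a b c * log (P a b c / PAB a b) +
        ∑ b, ∑ y, ∑ c, NP y b c * log ((∑ c', NP y b c') / NP y b c) := by
  calc ∑ a, ∑ b, ∑ c, P a b c * log (P a b c / Phat a b c)
      ≤ ∑ a, ∑ b, ∑ c, (P a b c * log (P a b c / PAB a b) +
          ∑ y, NA y a * (P a b c * log ((∑ c', NP y b c') / NP y b c))) :=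
        sum_le_sum fun a _ => sum_le_sum fun b _ => sum_le_sum fun c _ =>
          mul_log_div_recovery_le hP hN hNrow hPAB hNP hPhat a b c
    _ = _ := by
      simp only [sum_add_distrib]
      congr 1
      rw [sum_comm]
      refine sum_congr rfl fun b _ => ?_
      rw [sum_congr rfl fun a _ => sum_comm, sum_comm]
      refine sum_congr rfl fun y _ => ?_
      rw [sum_comm]
      refine sum_congr rfl fun c _ => ?_
      simp only [← mul_assoc, ← sum_mul, ← hNP]

lemma sum_recovery [Fintype XA] [Fintype XB] [Fintype XC] (hP : ∀ a b c, 0 < P a b c)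
    (hN : ∀ y x, 0 ≤ NA y x) (hNrow : ∀ x, ∑ y, NA y x = 1)
    (hPAB : ∀ a b, PAB a b = ∑ c, P a b c) (hNP : ∀ y b c, NP y b c = ∑ a, NA y a * P a b c)
    (hPhat : ∀ a b c, Phat a b c =
      ∑ y, (NA y a * PAB a b / ∑ a', NA y a' * PAB a' b) * NP y b c) :
    ∑ a, ∑ b, ∑ c, Phat a b c = ∑ a, ∑ b, ∑ c, P a b c := by
  have hrot : ∀ f : XA → XB → XC → ℝ, ∑ a, ∑ b, ∑ c, f a b c = ∑ b, ∑ c, ∑ a, f a b c :=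
    fun f => by rw [sum_comm]; exact sum_congr rfl fun b _ => sum_comm
  rw [hrot, hrot P]
  simp only [sum_recovery_fst hP hN hNrow hPAB hNP hPhat]

lemma sum_channel_mul_log_le [Fintype XA] [Fintype XB] [Fintype XC] {PBC : XB → XC → ℝ}
    {PB : XB → ℝ} (hP : ∀ a b c, 0 < P a b c) (hN : ∀ y x, 0 ≤ NA y x)
    (hNrow : ∀ x, ∑ y, NA y x = 1) (hPBC : ∀ b c, PBC b c = ∑ a, P a b c)
    (hPB : ∀ b, PB b = ∑ c, PBC b c) (hNP : ∀ y b c, NP y b c = ∑ a, NA y a * P a b c) :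
    ∑ b, ∑ y, ∑ c, NP y b c * log ((∑ c', NP y b c') / NP y b c) ≤
      ∑ b, ∑ c, PBC b c * log (PB b / PBC b c) := by
  refine sum_le_sum fun b _ => ?_
  have hfst : ∀ c, ∑ y, NP y b c = PBC b c := fun c => by
    rw [sum_channel_fst hNrow hNP, hPBC]
  have htotal : ∑ y, ∑ c, NP y b c = PB b := by
    rw [sum_comm, hPB]
    simp only [hfst]
  simpa only [htotal, hfst] using
    sum_sum_mul_log_sum_div_le (Q := fun y c => NP y b c) (channel_nonneg hP hN hNP · b ·)

end Recovery

/-- Combined Pinsker + CMI bound: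
`2 TV(P, P̂)² ≤ D_KL(P ‖ P̂) ≤ I(X_A : X_C | X_B)_P`. -/
theorem tv_le_cmi {XA XB XC : Type*}
    [Fintype XA] [Fintype XB] [Fintype XC]
    (P : XA → XB → XC → ℝ)
    (hPpos : ∀ a b c, 0 < P a b c) (hPsum : ∑ a, ∑ b, ∑ c, P a b c = 1)
    (NA : XA → XA → ℝ) (hNnn : ∀ y x, 0 ≤ NA y x) (hNrow : ∀ x, ∑ y, NA y x = 1)
    (PAB : XA → XB → ℝ) (hPAB : ∀ a b, PAB a b = ∑ c, P a b c)
    (PBC : XB → XC → ℝ) (hPBC : ∀ b c, PBC b c = ∑ a, P a b c)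
    (PB : XB → ℝ) (hPB : ∀ b, PB b = ∑ a, ∑ c, P a b c)
    (NP : XA → XB → XC → ℝ)
    (hNP : ∀ y b c, NP y b c = ∑ a, NA y a * P a b c)
    (Phat : XA → XB → XC → ℝ)
    (hPhat : ∀ a b c, Phat a b c =
      ∑ y, (NA y a * PAB a b / ∑ a', NA y a' * PAB a' b) * NP y b c)
    (H3 HAB HBC HB : ℝ)
    (hH3 : H3 = -∑ a, ∑ b, ∑ c, P a b c * Real.log (P a b c))
    (hHAB : HAB = -∑ a, ∑ b, PAB a b * Real.log (PAB a b))
    (hHBC : HBC = -∑ b, ∑ c, PBC b c * Real.log (PBC b c))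
    (hHB : HB = -∑ b, PB b * Real.log (PB b))
    -- total variation distance between `P` and `P̂`
    (TV : ℝ) (hTV : TV = (1/2) * ∑ a, ∑ b, ∑ c, |P a b c - Phat a b c|) :
    2 * TV ^ 2 ≤ (∑ a, ∑ b, ∑ c, P a b c * Real.log (P a b c / Phat a b c))
    ∧ (∑ a, ∑ b, ∑ c, P a b c * Real.log (P a b c / Phat a b c))
        ≤ HAB + HBC - H3 - HB := by
  have hPB_sum : ∀ b, PB b = ∑ c, PBC b c := fun b => by
    simp only [hPB, hPBC]
    exact sum_comm
  refine ⟨?_, ?_⟩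
  · have := pinsker_inequality (p := fun x : XA × XB × XC => P x.1 x.2.1 x.2.2)
      (q := fun x => Phat x.1 x.2.1 x.2.2) (fun _ => hPpos _ _ _)
      (fun _ => recovery_pos hPpos hNnn hNrow hPAB hNP hPhat _ _ _)
      (by simpa only [Fintype.sum_prod_type] using hPsum)
      (by simpa only [Fintype.sum_prod_type, sum_recovery hPpos hNnn hNrow hPAB hNP hPhat]
        using hPsum)
    simp only [Fintype.sum_prod_type] at this
    rw [hTV]
    linarith
  · calc ∑ a, ∑ b, ∑ c, P a b c * log (P a b c / Phat a b c)
        ≤ ∑ a, ∑ b, ∑ c, P a b c * log (P a b c / PAB a b) +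
            ∑ b, ∑ c, PBC b c * log (PB b / PBC b c) :=
          (kl_recovery_le hPpos hNnn hNrow hPAB hNP hPhat).trans
            (add_le_add_right (sum_channel_mul_log_le hPpos hNnn hNrow hPBC hPB_sum hNP) _)
      _ = HAB + HBC - H3 - HB := by
          rw [sum_congr rfl fun a _ =>
              sum_sum_mul_log_div_marginal (fun b c => (hPpos a b c).le) (hPAB a),
            sum_sub_distrib]
          simp only [log_div_eq_neg_log_div (PB _), mul_neg, sum_neg_distrib]
          rw [sum_sum_mul_log_div_marginal
            (fun b c => hPBC b c ▸ sum_nonneg fun a _ => (hPpos a b c).le) hPB_sum, hH3, hHAB,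
            hHBC, hHB]
          ring
end

section
/- (Donsker–Varadhan lower bound.) For probability distributions P, Q on a finite set X with supp(P) ⊆ supp(Q), and any function T : X → ℝ, one has D_KL(P ‖ Q) ≥ E_P[T] − log(E_Q[e^T]), where E_P[T] = ∑_x P(x)T(x) and E_Q[e^T] = ∑_x Q(x)e^{T(x)}. -/
open Finset Real

/-! The quantity `E_P[T] - log E_Q[e^T]` falls short of `D_KL(P ‖ Q)` by exactly `D_KL(P ‖ Q_T)`,
where `Q_T ∝ Q e^T` is the exponential tilt of `Q`; this gap is nonnegative by Gibbs' inequality,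
which in turn is `log x ≤ x - 1` summed against `P`. -/

lemma sub_le_mul_log_div_s19 {p q : ℝ} (hp : 0 ≤ p) (hq : 0 ≤ q) (hpq : 0 < p → 0 < q) :
    p - q ≤ p * log (p / q) := by
  rcases hp.eq_or_lt with rfl | hp
  · simpa using hq
  · have h := one_sub_inv_le_log_of_pos (div_pos hp (hpq hp))
    rw [inv_div] at h
    calc p - q = p * (1 - q / p) := by field_simp
      _ ≤ p * log (p / q) := mul_le_mul_of_nonneg_left h hp.le

theorem sum_mul_log_div_nonneg {ι : Type*} (s : Finset ι) {p q : ι → ℝ}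
    (hp : ∀ i ∈ s, 0 ≤ p i) (hq : ∀ i ∈ s, 0 ≤ q i) (hpq : ∀ i ∈ s, 0 < p i → 0 < q i)
    (hsum : ∑ i ∈ s, q i ≤ ∑ i ∈ s, p i) :
    0 ≤ ∑ i ∈ s, p i * log (p i / q i) :=
  calc 0 ≤ ∑ i ∈ s, (p i - q i) := by rw [sum_sub_distrib]; linarith
    _ ≤ ∑ i ∈ s, p i * log (p i / q i) :=
      sum_le_sum fun i hi => sub_le_mul_log_div_s19 (hp i hi) (hq i hi) (hpq i hi)

section ExpTilt

variable {X : Type*} [Fintype X]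

noncomputable def expTilt (Q T : X → ℝ) (x : X) : ℝ :=
  Q x * exp (T x) / ∑ y, Q y * exp (T y)

lemma sum_mul_exp_pos {Q : X → ℝ} (hQ : ∀ x, 0 ≤ Q x) {x₀ : X} (hx₀ : 0 < Q x₀) (T : X → ℝ) :
    0 < ∑ x, Q x * exp (T x) :=
  sum_pos' (fun x _ => mul_nonneg (hQ x) (exp_pos _).le)
    ⟨x₀, mem_univ _, mul_pos hx₀ (exp_pos _)⟩

lemma sum_expTilt {Q : X → ℝ} (T : X → ℝ) (hZ : ∑ x, Q x * exp (T x) ≠ 0) :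
    ∑ x, expTilt Q T x = 1 := by
  simp only [expTilt, ← sum_div, div_self hZ]

lemma expTilt_nonneg {Q : X → ℝ} (hQ : ∀ x, 0 ≤ Q x) (T : X → ℝ) (x : X) :
    0 ≤ expTilt Q T x :=
  div_nonneg (mul_nonneg (hQ x) (exp_pos _).le)
    (sum_nonneg fun y _ => mul_nonneg (hQ y) (exp_pos _).le)

lemma expTilt_pos {Q : X → ℝ} (hQ : ∀ x, 0 ≤ Q x) (T : X → ℝ) {x : X} (hx : 0 < Q x) :
    0 < expTilt Q T x :=
  div_pos (mul_pos hx (exp_pos _)) (sum_mul_exp_pos hQ hx T)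

lemma mul_log_div_expTilt {P Q : X → ℝ} (T : X → ℝ) {x : X} (hPQ : P x ≠ 0 → Q x ≠ 0)
    (hZ : ∑ y, Q y * exp (T y) ≠ 0) :
    P x * log (P x / expTilt Q T x)
      = P x * log (P x / Q x) - P x * T x + P x * log (∑ y, Q y * exp (T y)) := by
  rcases eq_or_ne (P x) 0 with hP | hP
  · simp [hP]
  have hQexp : Q x * exp (T x) ≠ 0 := mul_ne_zero (hPQ hP) (exp_ne_zero _)
  rw [expTilt, log_div hP (div_ne_zero hQexp hZ), log_div hQexp hZ,
    log_mul (hPQ hP) (exp_ne_zero _), log_exp, log_div hP (hPQ hP)]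
  ring

end ExpTilt

theorem donsker_varadhan_lower_general {X : Type*} [Fintype X]
    (P Q : X → ℝ)
    (hPnn : ∀ x, 0 ≤ P x) (hPsum : ∑ x, P x = 1)
    (hQnn : ∀ x, 0 ≤ Q x)
    (hsupp : ∀ x, 0 < P x → 0 < Q x)
    (T : X → ℝ) :
    (∑ x, P x * T x) - Real.log (∑ x, Q x * Real.exp (T x))
      ≤ ∑ x, P x * Real.log (P x / Q x) := by
  obtain ⟨x₀, -, hx₀⟩ : ∃ x ∈ univ, (0 : X → ℝ) x < P x :=
    exists_lt_of_sum_lt (by simp [hPsum])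
  have hZ := sum_mul_exp_pos hQnn (hsupp x₀ hx₀) T
  have gibbs := sum_mul_log_div_nonneg univ (fun x _ => hPnn x)
    (fun x _ => expTilt_nonneg hQnn T x) (fun x _ hx => expTilt_pos hQnn T (hsupp x hx))
    (by rw [sum_expTilt T hZ.ne', hPsum])
  rw [sum_congr rfl fun x _ => mul_log_div_expTilt T
    (fun hP => (hsupp x ((hPnn x).lt_of_ne' hP)).ne') hZ.ne', sum_add_distrib,
    sum_sub_distrib, ← sum_mul, hPsum, one_mul] at gibbs
  linarith

/-- Donsker–Varadhan lower bound:
`D_KL(P ‖ Q) ≥ E_P[T] − log(E_Q[e^T])`. -/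
theorem donsker_varadhan_lower {X : Type*} [Fintype X]
    (P Q : X → ℝ)
    (hPnn : ∀ x, 0 ≤ P x) (hPsum : ∑ x, P x = 1)
    (hQnn : ∀ x, 0 ≤ Q x) (hQsum : ∑ x, Q x = 1)
    (hsupp : ∀ x, 0 < P x → 0 < Q x)
    (T : X → ℝ) :
    (∑ x, P x * T x) - Real.log (∑ x, Q x * Real.exp (T x))
      ≤ ∑ x, P x * Real.log (P x / Q x) :=
  donsker_varadhan_lower_general P Q hPnn hPsum hQnn hsupp T
end
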